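/- arXiv:1912.01990 — 4 statements merged into one kernel-verified Lean document; each statement's English description precedes it below -/
import Mathlib

section
/- Let G be a finite simple graph, let X be a nonempty subset of V(G), and let H_P and H_Q be subgraphs of G such that V(H_P) ∩ V(H_Q) = X, E(H_P) ∩ E(H_Q) = ∅, and every connected component of H_P and every connected component of H_Q contains at least one vertex of X. Let P be the partition of X defined by H_P and let Q be the partition of X defined by H_Q. Then the graph H_P ∪ H_Q is connected if and only if the join P ⊔ Q is the trivial partition {X} (i.e., P ⊔ Q relates every pair of elements of X). -/
/-!
A walk in `HP ∪ HQ` between two vertices of `X` splits into maximal runs of `HP`-edges and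
`HQ`-edges; a vertex where the walk switches from one graph to the other lies in both
`V(HP)` and `V(HQ)`, hence in `X`. So consecutive switch points are related by `P` or `Q`,
and the endpoints by `P ⊔ Q`. Conversely every `P`- or `Q`-relation is realised by a path of
`HP ∪ HQ`, and every vertex of `HP ∪ HQ` is joined to `X`.
-/

open Relation

namespace SimpleGraph

variable {V : Type*}

section TwoGraphs

variable {A B : SimpleGraph V} {X : Set V}

/-- The union of the partitions of `X` cut out by the components of `A` and of `B`; its
`EqvGen` is their join. -/
def sameComponentOn (A B : SimpleGraph V) (X : Set V) (a b : V) : Prop :=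
  a ∈ X ∧ b ∈ X ∧ (A.Reachable a b ∨ B.Reachable a b)

lemma sameComponentOn_comm : sameComponentOn A B X = sameComponentOn B A X := by
  ext a b
  simp only [sameComponentOn, or_comm]

lemma reachable_sup_of_eqvGen_sameComponentOn {x y : V}
    (h : EqvGen (sameComponentOn A B X) x y) : (A ⊔ B).Reachable x y := by
  refine (reachable_is_equivalence _).eqvGen_iff.1 (EqvGen.mono ?_ x y h)
  rintro a b ⟨-, -, hab | hab⟩
  · exact hab.mono le_sup_left
  · exact hab.mono le_sup_right

variable (hsupp : ∀ a ∈ A.support, a ∈ B.support → a ∈ X)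
include hsupp

/-- The new witness is `z` itself, or `u` when the walk switches from `B` to `A` at `u`. -/
lemma exists_sameComponentOn_of_adj_left {z u w : V} (hz : z ∈ X)
    (hzu : A.Reachable z u ∨ B.Reachable z u) (huw : A.Adj u w) :
    ∃ z' ∈ X, EqvGen (sameComponentOn A B X) z z' ∧
      (A.Reachable z' w ∨ B.Reachable z' w) := by
  rcases hzu with hzu | hzu
  · exact ⟨z, hz, EqvGen.refl z, Or.inl (hzu.trans huw.reachable)⟩
  obtain rfl | hne := eq_or_ne u z
  · exact ⟨u, hz, EqvGen.refl u, Or.inl huw.reachable⟩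
  have hu : u ∈ X := hsupp u huw.mem_support_left (mem_support_of_reachable hne hzu.symm)
  exact ⟨u, hu, EqvGen.rel z u ⟨hz, hu, Or.inr hzu⟩, Or.inl huw.reachable⟩

lemma exists_sameComponentOn_of_adj_sup {z u w : V} (hz : z ∈ X)
    (hzu : A.Reachable z u ∨ B.Reachable z u) (huw : (A ⊔ B).Adj u w) :
    ∃ z' ∈ X, EqvGen (sameComponentOn A B X) z z' ∧
      (A.Reachable z' w ∨ B.Reachable z' w) := by
  rcases huw with huw | huw
  · exact exists_sameComponentOn_of_adj_left hsupp hz hzu huw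
  · obtain ⟨z', hz', hzz', hz'w⟩ :=
      exists_sameComponentOn_of_adj_left (fun a ha hb => hsupp a hb ha) hz hzu.symm huw
    exact ⟨z', hz', sameComponentOn_comm (X := X) ▸ hzz', hz'w.symm⟩

lemma exists_sameComponentOn_of_reachable_sup {x v : V} (hx : x ∈ X)
    (h : (A ⊔ B).Reachable x v) :
    ∃ z ∈ X, EqvGen (sameComponentOn A B X) x z ∧ (A.Reachable z v ∨ B.Reachable z v) := by
  rw [reachable_iff_reflTransGen] at h
  induction h with
  | refl => exact ⟨x, hx, EqvGen.refl x, Or.inl Reachable.rfl⟩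
  | tail _ huw ih =>
    obtain ⟨z, hz, hxz, hzu⟩ := ih
    obtain ⟨z', hz', hzz', hz'w⟩ := exists_sameComponentOn_of_adj_sup hsupp hz hzu huw
    exact ⟨z', hz', hxz.trans _ _ _ hzz', hz'w⟩

lemma reachable_sup_iff_eqvGen_sameComponentOn {x y : V} (hx : x ∈ X) (hy : y ∈ X) :
    (A ⊔ B).Reachable x y ↔ EqvGen (sameComponentOn A B X) x y := by
  refine ⟨fun h => ?_, reachable_sup_of_eqvGen_sameComponentOn⟩
  obtain ⟨z, hz, hxz, hzy⟩ := exists_sameComponentOn_of_reachable_sup hsupp hx h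
  exact hxz.trans _ _ _ (EqvGen.rel z y ⟨hz, hy, hzy⟩)

end TwoGraphs

lemma forall_reachable_iff_of_forall_exists_reachable {G : SimpleGraph V} {S X : Set V}
    (hXS : X ⊆ S) (hS : ∀ v ∈ S, ∃ x ∈ X, G.Reachable v x) :
    (∀ u ∈ S, ∀ v ∈ S, G.Reachable u v) ↔ ∀ x ∈ X, ∀ y ∈ X, G.Reachable x y := by
  refine ⟨fun h x hx y hy => h x (hXS hx) y (hXS hy), fun h u hu v hv => ?_⟩
  obtain ⟨x, hx, hux⟩ := hS u hu
  obtain ⟨y, hy, hvy⟩ := hS v hv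
  exact (hux.trans (h x hx y hy)).trans hvy.symm

namespace Subgraph

variable {G : SimpleGraph V}

lemma mem_verts_of_mem_support_spanningCoe {H : G.Subgraph} {v : V}
    (hv : v ∈ H.spanningCoe.support) : v ∈ H.verts := by
  obtain ⟨w, hvw⟩ := hv
  exact (hvw : H.Adj v w).fst_mem

lemma reachable_coe_of_reachable_spanningCoe {H : G.Subgraph} {u v : V} (hu : u ∈ H.verts)
    (hv : v ∈ H.verts) (h : H.spanningCoe.Reachable u v) :
    H.coe.Reachable ⟨u, hu⟩ ⟨v, hv⟩ := by
  obtain ⟨p⟩ := h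
  induction p with
  | nil => exact Reachable.rfl
  | cons hab _ ih =>
    have hb := (hab : H.Adj _ _).snd_mem
    exact (show H.coe.Adj ⟨_, hu⟩ ⟨_, hb⟩ from hab).reachable.trans (ih hb hv)

lemma coe_reachable_iff {H : G.Subgraph} {u v : H.verts} :
    H.coe.Reachable u v ↔ H.spanningCoe.Reachable u v :=
  ⟨fun h => h.map ⟨Subtype.val, id⟩, reachable_coe_of_reachable_spanningCoe u.2 v.2⟩

lemma connected_iff_forall_reachable_spanningCoe {H : G.Subgraph} :
    H.Connected ↔
      H.verts.Nonempty ∧ ∀ u ∈ H.verts, ∀ v ∈ H.verts, H.spanningCoe.Reachable u v := by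
  rw [Subgraph.connected_iff, Subgraph.preconnected_iff, and_comm]
  exact and_congr_right' ⟨fun h u hu v hv => coe_reachable_iff.1 (h ⟨u, hu⟩ ⟨v, hv⟩),
    fun h u v => coe_reachable_iff.2 (h u u.2 v v.2)⟩

end Subgraph

end SimpleGraph

open SimpleGraph

theorem union_connected_iff_partition_join_trivial_general {V : Type*} (G : SimpleGraph V)
    (HP HQ : G.Subgraph) (X : Set V)
    (hX : X.Nonempty)
    (hV : HP.verts ∩ HQ.verts = X)
    (hCP : ∀ v ∈ HP.verts, ∃ x ∈ X, HP.spanningCoe.Reachable v x)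
    (hCQ : ∀ v ∈ HQ.verts, ∃ x ∈ X, HQ.spanningCoe.Reachable v x) :
    (HP ⊔ HQ).Connected ↔
      ∀ x ∈ X, ∀ y ∈ X,
        Relation.EqvGen
          (fun a b => a ∈ X ∧ b ∈ X ∧
            (HP.spanningCoe.Reachable a b ∨ HQ.spanningCoe.Reachable a b)) x y := by
  have hXP : X ⊆ HP.verts := hV ▸ Set.inter_subset_left
  have hsupp : ∀ a ∈ HP.spanningCoe.support, a ∈ HQ.spanningCoe.support → a ∈ X :=
    fun a hP hQ => hV ▸ ⟨Subgraph.mem_verts_of_mem_support_spanningCoe hP,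
      Subgraph.mem_verts_of_mem_support_spanningCoe hQ⟩
  have hXU : X ⊆ (HP ⊔ HQ).verts := fun x hx => Or.inl (hXP hx)
  have hanchor : ∀ v ∈ (HP ⊔ HQ).verts, ∃ x ∈ X,
      (HP.spanningCoe ⊔ HQ.spanningCoe).Reachable v x := by
    rintro v (hv | hv)
    · obtain ⟨x, hx, hvx⟩ := hCP v hv
      exact ⟨x, hx, hvx.mono le_sup_left⟩
    · obtain ⟨x, hx, hvx⟩ := hCQ v hv
      exact ⟨x, hx, hvx.mono le_sup_right⟩
  rw [Subgraph.connected_iff_forall_reachable_spanningCoe, Subgraph.sup_spanningCoe,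
    forall_reachable_iff_of_forall_exists_reachable hXU hanchor, and_iff_right (hX.mono hXU)]
  exact forall₂_congr fun x hx => forall₂_congr fun y hy =>
    reachable_sup_iff_eqvGen_sameComponentOn hsupp hx hy

/-- With `HP`, `HQ` subgraphs of a finite simple graph `G` such that
`V(HP) ∩ V(HQ) = X` (nonempty), `E(HP) ∩ E(HQ) = ∅`, and every connected component of `HP`
and of `HQ` containing a vertex of `X`: the union `HP ∪ HQ` is connected iff the join
`P ⊔ Q` of the partitions of `X` defined by `HP` and `HQ` is the trivial partition `{X}`,
i.e. iff the equivalence closure of the union (restricted to `X`) of the two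
"same connected component" relations relates every pair of elements of `X`. -/
theorem union_connected_iff_partition_join_trivial {V : Type*} [Fintype V] (G : SimpleGraph V)
    (HP HQ : G.Subgraph) (X : Set V)
    (hX : X.Nonempty)
    (hV : HP.verts ∩ HQ.verts = X)
    (hE : HP.edgeSet ∩ HQ.edgeSet = ∅)
    (hCP : ∀ v ∈ HP.verts, ∃ x ∈ X, HP.spanningCoe.Reachable v x)
    (hCQ : ∀ v ∈ HQ.verts, ∃ x ∈ X, HQ.spanningCoe.Reachable v x) :
    (HP ⊔ HQ).Connected ↔
      ∀ x ∈ X, ∀ y ∈ X,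
        Relation.EqvGen
          (fun a b => a ∈ X ∧ b ∈ X ∧
            (HP.spanningCoe.Reachable a b ∨ HQ.spanningCoe.Reachable a b)) x y :=
  union_connected_iff_partition_join_trivial_general G HP HQ X hX hV hCP hCQ
end

section
/- Let G be a finite simple graph, let X be a nonempty subset of V(G), and let H_P and H_Q be subgraphs of G with V(H_P) ∩ V(H_Q) = X and E(H_P) ∩ E(H_Q) = ∅. Let G_P and G_Q be simple graphs on the vertex set X such that for all x, y ∈ X, x and y lie in the same connected component of G_P if and only if they lie in the same connected component of H_P, and for all x, y ∈ X, x and y lie in the same connected component of G_Q if and only if they lie in the same connected component of H_Q. Then for all x₁, x₂ ∈ X, x₁ and x₂ lie in the same connected component of H_P ∪ H_Q if and only if x₁ and x₂ lie in the same connected component of G_P ∪ G_Q. -/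
/-!
A walk in `HP ∪ HQ` between two vertices of `X` alternates between maximal stretches of
`HP`-edges and of `HQ`-edges. A vertex where the walk switches from one kind to the other carries
edges of both subgraphs, so it lies in `V(HP) ∩ V(HQ) = X`. Hence the walk is a chain of
`HP`- and `HQ`-connections between vertices of `X`, and these are exactly the connections
provided by `GP` and `GQ`.
-/

open Relation

namespace SimpleGraph

variable {V : Type*} {G₁ G₂ : SimpleGraph V}

theorem reachable_sup_iff_reflTransGen {a b : V} :
    (G₁ ⊔ G₂).Reachable a b ↔
      ReflTransGen (fun u v ↦ G₁.Reachable u v ∨ G₂.Reachable u v) a b := by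
  constructor
  · rw [reachable_iff_reflTransGen]
    exact ReflTransGen.mono (fun u v huv ↦ huv.imp Adj.reachable Adj.reachable) a b
  · intro h
    induction h with
    | refl => rfl
    | tail _ hstep ih =>
      exact ih.trans (hstep.elim (·.mono le_sup_left) (·.mono le_sup_right))

theorem mem_of_reachable_of_adj {X : Set V} (hX : G₁.support ∩ G₂.support ⊆ X) {a u v : V}
    (ha : a ∈ X) (hau : G₂.Reachable a u) (huv : G₁.Adj u v) : u ∈ X := by
  obtain rfl | hne := eq_or_ne a u
  · exact ha
  · exact hX ⟨(mem_support G₁).2 ⟨v, huv⟩, mem_support_of_reachable hne.symm hau.symm⟩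

theorem reachable_sup_iff_reflTransGen_on {X : Set V} (hX : G₁.support ∩ G₂.support ⊆ X)
    (x y : X) :
    (G₁ ⊔ G₂).Reachable x y ↔
      ReflTransGen (fun a b : X ↦ G₁.Reachable a b ∨ G₂.Reachable a b) x y := by
  set T := ReflTransGen (fun a b : X ↦ G₁.Reachable a b ∨ G₂.Reachable a b)
  constructor
  · intro h
    suffices key : ∀ u, ReflTransGen (G₁ ⊔ G₂).Adj u y →
        ∀ a : X, G₁.Reachable a u ∨ G₂.Reachable a u → T a y from
      key x ((reachable_iff_reflTransGen _ _).1 h) x (Or.inl .rfl)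
    intro u hu
    induction hu using ReflTransGen.head_induction_on with
    | refl => exact fun a ha ↦ .single ha
    | @head u v huv _ ih =>
      rintro a (hau | hau)
      · rcases huv with huv | huv
        · exact ih a (.inl (hau.trans huv.reachable))
        · have hu : u ∈ X := mem_of_reachable_of_adj (Set.inter_comm _ _ ▸ hX) a.2 hau huv
          exact (ReflTransGen.single (.inl hau)).trans (ih ⟨u, hu⟩ (.inr huv.reachable))
      · rcases huv with huv | huv
        · have hu : u ∈ X := mem_of_reachable_of_adj hX a.2 hau huv
          exact (ReflTransGen.single (.inr hau)).trans (ih ⟨u, hu⟩ (.inl huv.reachable))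
        · exact ih a (.inr (hau.trans huv.reachable))
  · intro h
    exact reachable_sup_iff_reflTransGen.2 (h.lift Subtype.val fun _ _ ↦ id)

theorem reachable_sup_iff_of_support_inter_subset {X : Set V}
    (hX : G₁.support ∩ G₂.support ⊆ X) {H₁ H₂ : SimpleGraph X}
    (h₁ : ∀ x y : X, H₁.Reachable x y ↔ G₁.Reachable x y)
    (h₂ : ∀ x y : X, H₂.Reachable x y ↔ G₂.Reachable x y) (x y : X) :
    (G₁ ⊔ G₂).Reachable x y ↔ (H₁ ⊔ H₂).Reachable x y := by
  simp only [reachable_sup_iff_reflTransGen_on hX, reachable_sup_iff_reflTransGen, h₁, h₂]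

end SimpleGraph

open SimpleGraph

theorem reachable_union_iff_reachable_union_on_X_general {V : Type*} (G : SimpleGraph V)
    (HP HQ : G.Subgraph) (X : Set V)
    (hV : HP.verts ∩ HQ.verts = X)
    (GP GQ : SimpleGraph X)
    (hGP : ∀ x y : X, GP.Reachable x y ↔ HP.spanningCoe.Reachable (x : V) (y : V))
    (hGQ : ∀ x y : X, GQ.Reachable x y ↔ HQ.spanningCoe.Reachable (x : V) (y : V)) :
    ∀ x y : X,
      (HP ⊔ HQ).spanningCoe.Reachable (x : V) (y : V) ↔ (GP ⊔ GQ).Reachable x y := by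
  have hsupport : HP.spanningCoe.support ∩ HQ.spanningCoe.support ⊆ X :=
    hV ▸ Set.inter_subset_inter HP.support_subset_verts HQ.support_subset_verts
  rw [Subgraph.sup_spanningCoe]
  exact reachable_sup_iff_of_support_inter_subset hsupport hGP hGQ

/-- Let `HP`, `HQ` be subgraphs of a finite simple graph `G` with
`V(HP) ∩ V(HQ) = X` (nonempty) and `E(HP) ∩ E(HQ) = ∅`, and let `GP`, `GQ` be simple graphs
on the vertex set `X` whose "same connected component" relations agree with those of `HP`
and `HQ` respectively (on pairs of vertices of `X`). Then two vertices of `X` lie in the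
same connected component of `HP ∪ HQ` iff they lie in the same connected component of
`GP ∪ GQ`. -/
theorem reachable_union_iff_reachable_union_on_X {V : Type*} [Fintype V] (G : SimpleGraph V)
    (HP HQ : G.Subgraph) (X : Set V)
    (hX : X.Nonempty)
    (hV : HP.verts ∩ HQ.verts = X)
    (hE : HP.edgeSet ∩ HQ.edgeSet = ∅)
    (GP GQ : SimpleGraph X)
    (hGP : ∀ x y : X, GP.Reachable x y ↔ HP.spanningCoe.Reachable (x : V) (y : V))
    (hGQ : ∀ x y : X, GQ.Reachable x y ↔ HQ.spanningCoe.Reachable (x : V) (y : V)) :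
    ∀ x y : X,
      (HP ⊔ HQ).spanningCoe.Reachable (x : V) (y : V) ↔ (GP ⊔ GQ).Reachable x y :=
  reachable_union_iff_reachable_union_on_X_general G HP HQ X hV GP GQ hGP hGQ
end

section
/- Let G be a finite simple graph, let X be a nonempty subset of V(G), let O ⊆ X, and let A and B be subgraphs of G such that: V(A) ∩ V(B) = X; E(A) ∩ E(B) = ∅; every connected component of A and every connected component of B contains at least one vertex of X; the set of vertices of odd degree in A is exactly O and the set of vertices of odd degree in B is exactly O; and the join of the partition of X defined by A with the partition of X defined by B is the trivial partition {X}. Then A ∪ B is Eulerian; that is, A ∪ B is connected and every vertex of A ∪ B has even degree in A ∪ B. -/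
/-! Since `A` and `B` share no edge, the degree of a vertex in `A ∪ B` is the sum of its degrees
in `A` and in `B`, and these have the same parity because both graphs have odd set `O`.
Every vertex of `A` (of `B`) reaches `X` inside `A` (inside `B`), and the join condition links
any two vertices of `X` by a chain of `A`- and `B`-paths, so `A ∪ B` is connected. -/

namespace SimpleGraph.Subgraph

variable {V : Type*} {G : SimpleGraph V}

lemma exists_walk_toSubgraph_le_of_reachable_spanningCoe {H : G.Subgraph} {u v : V}
    (hu : u ∈ H.verts) (h : H.spanningCoe.Reachable u v) :
    ∃ p : G.Walk u v, p.toSubgraph ≤ H := by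
  obtain ⟨p⟩ := h
  induction p with
  | nil => exact ⟨.nil, by simpa [singletonSubgraph_le_iff] using hu⟩
  | @cons a b _ hab _ ih =>
    have hab : H.Adj a b := hab
    obtain ⟨p, hp⟩ := ih (H.edge_vert hab.symm)
    exact ⟨.cons hab.adj_sub p, sup_le (subgraphOfAdj_le_of_adj H hab) hp⟩

lemma connected_of_forall_reachable_spanningCoe {H : G.Subgraph} {x : V} (hx : x ∈ H.verts)
    (h : ∀ u ∈ H.verts, H.spanningCoe.Reachable u x) : H.Connected := by
  rw [connected_iff_forall_exists_walk_subgraph]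
  exact ⟨⟨x, hx⟩, fun hu hv =>
    exists_walk_toSubgraph_le_of_reachable_spanningCoe hu ((h _ hu).trans (h _ hv).symm)⟩

variable [Finite V] {A B : G.Subgraph}

lemma ncard_neighborSet_sup (hE : Disjoint A.edgeSet B.edgeSet) (v : V) :
    ((A ⊔ B).neighborSet v).ncard = (A.neighborSet v).ncard + (B.neighborSet v).ncard := by
  have hdisj : Disjoint (A.neighborSet v) (B.neighborSet v) :=
    Set.disjoint_left.mpr fun w hwA hwB =>
      Set.disjoint_left.mp hE (show s(v, w) ∈ A.edgeSet from hwA) hwB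
  rw [neighborSet_sup, Set.ncard_union_eq hdisj]

lemma even_ncard_neighborSet_sup (hE : Disjoint A.edgeSet B.edgeSet)
    (hodd : ∀ v, Odd (A.neighborSet v).ncard ↔ Odd (B.neighborSet v).ncard) (v : V) :
    Even ((A ⊔ B).neighborSet v).ncard := by
  rw [ncard_neighborSet_sup hE, Nat.even_add, ← Nat.not_odd_iff_even, ← Nat.not_odd_iff_even,
    hodd]

end SimpleGraph.Subgraph

open SimpleGraph SimpleGraph.Subgraph in
theorem union_eulerian_general {V : Type*} [Fintype V] (G : SimpleGraph V)
    (A B : G.Subgraph) (X O : Set V)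
    (hX : X.Nonempty)
    (hV : A.verts ∩ B.verts = X)
    (hE : A.edgeSet ∩ B.edgeSet = ∅)
    (hCA : ∀ v ∈ A.verts, ∃ x ∈ X, A.spanningCoe.Reachable v x)
    (hCB : ∀ v ∈ B.verts, ∃ x ∈ X, B.spanningCoe.Reachable v x)
    (hOA : {v : V | Odd ((A.neighborSet v).ncard)} = O)
    (hOB : {v : V | Odd ((B.neighborSet v).ncard)} = O)
    (hJoin : ∀ x ∈ X, ∀ y ∈ X,
      Relation.EqvGen
        (fun a b => a ∈ X ∧ b ∈ X ∧
          (A.spanningCoe.Reachable a b ∨ B.spanningCoe.Reachable a b)) x y) :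
    (A ⊔ B).Connected ∧
      ∀ v ∈ (A ⊔ B).verts, Even (((A ⊔ B).neighborSet v).ncard) := by
  have hA_le : A.spanningCoe ≤ (A ⊔ B).spanningCoe := spanningCoe_le_of_le le_sup_left
  have hB_le : B.spanningCoe ≤ (A ⊔ B).spanningCoe := spanningCoe_le_of_le le_sup_right
  obtain ⟨x₀, hx₀⟩ := hX
  have hX_reach (x : V) (hx : x ∈ X) : (A ⊔ B).spanningCoe.Reachable x x₀ :=
    (reachable_is_equivalence _).eqvGen_iff.mp <| (hJoin x hx x₀ hx₀).mono
      fun _ _ h => h.2.2.elim (·.mono hA_le) (·.mono hB_le)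
  refine ⟨connected_of_forall_reachable_spanningCoe (Or.inl (hV ▸ hx₀).1) ?_,
    fun v _ => even_ncard_neighborSet_sup (Set.disjoint_iff_inter_eq_empty.mpr hE)
      (Set.ext_iff.mp (hOA.trans hOB.symm)) v⟩
  rintro u (hu | hu)
  · obtain ⟨x, hx, hux⟩ := hCA u hu
    exact (hux.mono hA_le).trans (hX_reach x hx)
  · obtain ⟨x, hx, hux⟩ := hCB u hu
    exact (hux.mono hB_le).trans (hX_reach x hx)

/-- Let `A`, `B` be subgraphs of a finite simple graph `G` with
`V(A) ∩ V(B) = X` (nonempty), `E(A) ∩ E(B) = ∅`, every connected component of `A` and of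
`B` containing a vertex of `X`, the sets of odd-degree vertices of `A` and of `B` both
equal to `O ⊆ X`, and the join of the partitions of `X` defined by `A` and by `B` the
trivial partition `{X}`. Then `A ∪ B` is Eulerian: it is connected and every one of its
vertices has even degree in it. -/
theorem union_eulerian {V : Type*} [Fintype V] (G : SimpleGraph V)
    (A B : G.Subgraph) (X O : Set V)
    (hX : X.Nonempty)
    (hO : O ⊆ X)
    (hV : A.verts ∩ B.verts = X)
    (hE : A.edgeSet ∩ B.edgeSet = ∅)
    (hCA : ∀ v ∈ A.verts, ∃ x ∈ X, A.spanningCoe.Reachable v x)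
    (hCB : ∀ v ∈ B.verts, ∃ x ∈ X, B.spanningCoe.Reachable v x)
    (hOA : {v : V | Odd ((A.neighborSet v).ncard)} = O)
    (hOB : {v : V | Odd ((B.neighborSet v).ncard)} = O)
    (hJoin : ∀ x ∈ X, ∀ y ∈ X,
      Relation.EqvGen
        (fun a b => a ∈ X ∧ b ∈ X ∧
          (A.spanningCoe.Reachable a b ∨ B.spanningCoe.Reachable a b)) x y) :
    (A ⊔ B).Connected ∧
      ∀ v ∈ (A ⊔ B).verts, Even (((A ⊔ B).neighborSet v).ncard) :=
  union_eulerian_general G A B X O hX hV hE hCA hCB hOA hOB hJoin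
end

section
/- Let G be a finite simple graph, let X be a nonempty subset of V(G), and let v be a vertex of G with v ∉ X. Let A and B be subgraphs of G such that V(A) ∩ V(B) = X ∪ {v}, E(A) ∩ E(B) = ∅, every connected component of A and every connected component of B contains at least one vertex of X ∪ {v}, and v has degree 0 in B. If A ∪ B is connected, then there exists v' ∈ X such that v and v' lie in the same connected component of A. -/
/-!
Suppose no vertex of `X` is `A`-reachable from `v`. Then the `A`-component of `v` is closed
under adjacency in `A ⊔ B`: an `A`-edge obviously keeps us inside it, and a `B`-edge can only
start at a vertex of `V(A) ∩ V(B) = X ∪ {v}`, which is neither in `X` (by assumption) nor `v`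
(which has no `B`-neighbours). Since `A ⊔ B` is connected, this component would contain a
vertex of `X`.
-/

namespace SimpleGraph

variable {V : Type*} {G : SimpleGraph V}

theorem Reachable.mem_of_adj_closed {S : Set V} (hS : ∀ ⦃a b⦄, G.Adj a b → a ∈ S → b ∈ S)
    {u w : V} (h : G.Reachable u w) (hu : u ∈ S) : w ∈ S := by
  by_contra hw
  obtain ⟨p⟩ := h
  obtain ⟨d, -, hd, hd'⟩ := p.exists_boundary_dart S hu hw
  exact hd' (hS d.adj hd)

theorem Subgraph.mem_verts_of_reachable_spanningCoe {H : G.Subgraph} {u w : V}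
    (h : H.spanningCoe.Reachable u w) (hu : u ∈ H.verts) : w ∈ H.verts :=
  h.mem_of_adj_closed (fun _ _ hab _ ↦ H.edge_vert hab.symm) hu

theorem Subgraph.Preconnected.reachable_spanningCoe {H : G.Subgraph} (hH : H.Preconnected)
    {u w : V} (hu : u ∈ H.verts) (hw : w ∈ H.verts) : H.spanningCoe.Reachable u w :=
  (hH ⟨u, hu⟩ ⟨w, hw⟩).map H.coeEmbeddingSpanningCoe.toHom

end SimpleGraph

open SimpleGraph

theorem exists_X_vertex_in_component_of_v_general {V : Type*} [Fintype V] (G : SimpleGraph V)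
    (A B : G.Subgraph) (X : Set V) (v : V)
    (hX : X.Nonempty)
    (hV : A.verts ∩ B.verts = X ∪ {v})
    (hdeg : (B.neighborSet v).ncard = 0)
    (hConn : (A ⊔ B).Connected) :
    ∃ v' ∈ X, A.spanningCoe.Reachable v v' := by
  by_contra! hnone
  obtain ⟨x, hx⟩ := hX
  have hvA : v ∈ A.verts := (hV ▸ Or.inr rfl : v ∈ A.verts ∩ B.verts).1
  have hxA : x ∈ A.verts := (hV ▸ Or.inl hx : x ∈ A.verts ∩ B.verts).1
  have hvB : B.neighborSet v = ∅ := (Set.ncard_eq_zero (Set.toFinite _)).mp hdeg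
  have hclosed : ∀ ⦃a b⦄, (A ⊔ B).spanningCoe.Adj a b →
      A.spanningCoe.Reachable v a → A.spanningCoe.Reachable v b := by
    rintro a b (hab | hab) hva
    · exact hva.trans (Adj.reachable (G := A.spanningCoe) hab)
    · have ha : a ∈ X ∪ {v} :=
        hV ▸ ⟨Subgraph.mem_verts_of_reachable_spanningCoe hva hvA, B.edge_vert hab⟩
      rcases ha with ha | rfl
      · exact absurd hva (hnone a ha)
      · exact (Set.notMem_empty b (hvB ▸ hab)).elim
  have hvx := hConn.preconnected.reachable_spanningCoe (Or.inl hvA) (Or.inl hxA)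
  exact hnone x hx (hvx.mem_of_adj_closed (S := A.spanningCoe.Reachable v) hclosed (Reachable.refl v))

/-- Let `A`, `B` be subgraphs of a finite simple graph `G`, let `X` be a
nonempty vertex subset and `v ∉ X` a vertex, with `V(A) ∩ V(B) = X ∪ {v}`,
`E(A) ∩ E(B) = ∅`, every connected component of `A` and of `B` containing a vertex of
`X ∪ {v}`, and `v` of degree `0` in `B`. If `A ∪ B` is connected then some `v' ∈ X` lies
in the same connected component of `A` as `v`. -/
theorem exists_X_vertex_in_component_of_v {V : Type*} [Fintype V] (G : SimpleGraph V)
    (A B : G.Subgraph) (X : Set V) (v : V)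
    (hX : X.Nonempty)
    (hv : v ∉ X)
    (hV : A.verts ∩ B.verts = X ∪ {v})
    (hE : A.edgeSet ∩ B.edgeSet = ∅)
    (hCA : ∀ u ∈ A.verts, ∃ x ∈ X ∪ {v}, A.spanningCoe.Reachable u x)
    (hCB : ∀ u ∈ B.verts, ∃ x ∈ X ∪ {v}, B.spanningCoe.Reachable u x)
    (hdeg : (B.neighborSet v).ncard = 0)
    (hConn : (A ⊔ B).Connected) :
    ∃ v' ∈ X, A.spanningCoe.Reachable v v' :=
  exists_X_vertex_in_component_of_v_general G A B X v hX hV hdeg hConn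
end
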